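/- Suppose the C¹ fields u, B, ρ, S, T, h, Φ satisfy: momentum du/dt = T∇S − ∇h + ((∇×B̃)×B)/(μ₀ρ) − ∇Φ where B̃ = B(1 − μ₀ p_Δ/|B|²); Faraday ∂_t B − B·∇u + u·∇B + (∇·u)B = 0; and ∇·B = 0. Then the cross-helicity density satisfies ∂_t(u·B) + ∇·( (u·B)u + (Φ + h − |u|²/2)B ) = T (B·∇S). -/

import Mathlib

open scoped BigOperators

noncomputable section

/-- Space: ℝ³ as functions `Fin 3 → ℝ`. -/
abbrev V3 := Fin 3 → ℝ

/-- Partial derivative of a scalar field in the `i`-th coordinate direction. -/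
def pd (i : Fin 3) (f : V3 → ℝ) (x : V3) : ℝ := fderiv ℝ f x (Pi.single i 1)

/-- Euclidean dot product on ℝ³. -/
def dot3 (a b : V3) : ℝ := ∑ i, a i * b i

/-- Cross product on ℝ³. -/
def cross3 (a b : V3) : V3 :=
  ![a 1 * b 2 - a 2 * b 1, a 2 * b 0 - a 0 * b 2, a 0 * b 1 - a 1 * b 0]

/-- Divergence of a vector field on ℝ³. -/
def div3 (F : V3 → V3) (x : V3) : ℝ := ∑ i, pd i (fun y => F y i) x

/-- Curl of a vector field on ℝ³. -/
def curl3 (F : V3 → V3) (x : V3) : V3 :=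
  ![pd 1 (fun y => F y 2) x - pd 2 (fun y => F y 1) x,
    pd 2 (fun y => F y 0) x - pd 0 (fun y => F y 2) x,
    pd 0 (fun y => F y 1) x - pd 1 (fun y => F y 0) x]

/-- Gradient of a scalar field on ℝ³. -/
def grad3 (f : V3 → ℝ) (x : V3) : V3 := fun i => pd i f x

/-- Euclidean norm on ℝ³. -/
def norm3 (a : V3) : ℝ := Real.sqrt (dot3 a a)

def C1Scalar (f : V3 → ℝ → ℝ) : Prop := ContDiff ℝ 1 (fun p : V3 × ℝ => f p.1 p.2)

def C1Vector (F : V3 → ℝ → V3) : Prop := ContDiff ℝ 1 (fun p : V3 × ℝ => F p.1 p.2)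


/-! Since `∂ₜ(u·B) = B·∂ₜu + u·∂ₜB`, the identity is `B·(momentum) + u·(Faraday)`, rearranged.
The magnetic force drops out because `(C × B)·B = 0` for every `C`, so the form of `B̃` is
irrelevant; Gauss's law removes the term `(Φ + h − |u|²/2) ∇·B` of the flux divergence; and the
advective terms `u·(B·∇)u`, `B·(u·∇)u`, `u·(u·∇)B` cancel pairwise between the two sides. -/

lemma dot3_cross3_self_right (a b : V3) : dot3 (cross3 a b) b = 0 := by
  simp only [dot3, cross3, Fin.sum_univ_three, Matrix.cons_val_zero, Matrix.cons_val_one,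
    Matrix.cons_val_two, Matrix.head_cons, Matrix.tail_cons]
  ring

namespace C1Scalar

lemma differentiableAt_space {f : V3 → ℝ → ℝ} (hf : C1Scalar f) (x : V3) (t : ℝ) :
    DifferentiableAt ℝ (fun y => f y t) x :=
  ((hf.differentiable one_ne_zero).comp
    (differentiable_id.prodMk (differentiable_const t))).differentiableAt

end C1Scalar

namespace C1Vector

lemma differentiableAt_space {F : V3 → ℝ → V3} (hF : C1Vector F) (x : V3) (t : ℝ)
    (i : Fin 3) : DifferentiableAt ℝ (fun y => F y t i) x :=
  differentiableAt_pi.1 ((hF.differentiable one_ne_zero).comp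
    (differentiable_id.prodMk (differentiable_const t))).differentiableAt i

lemma differentiableAt_time {F : V3 → ℝ → V3} (hF : C1Vector F) (x : V3) (t : ℝ)
    (i : Fin 3) : DifferentiableAt ℝ (fun s => F x s i) t :=
  differentiableAt_pi.1 ((hF.differentiable one_ne_zero).comp
    ((differentiable_const x).prodMk differentiable_id)).differentiableAt i

end C1Vector

section ProductRules

variable {f g : V3 → ℝ} {x : V3}

lemma pd_add (i : Fin 3) (hf : DifferentiableAt ℝ f x) (hg : DifferentiableAt ℝ g x) :
    pd i (fun y => f y + g y) x = pd i f x + pd i g x := by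
  simp [pd, fderiv_fun_add hf hg]

lemma pd_sub (i : Fin 3) (hf : DifferentiableAt ℝ f x) (hg : DifferentiableAt ℝ g x) :
    pd i (fun y => f y - g y) x = pd i f x - pd i g x := by
  simp [pd, fderiv_fun_sub hf hg]

lemma pd_mul (i : Fin 3) (hf : DifferentiableAt ℝ f x) (hg : DifferentiableAt ℝ g x) :
    pd i (fun y => f y * g y) x = f x * pd i g x + g x * pd i f x := by
  simp [pd, fderiv_fun_mul hf hg]

lemma pd_div_const (i : Fin 3) (c : ℝ) (hf : DifferentiableAt ℝ f x) :
    pd i (fun y => f y / c) x = pd i f x / c := by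
  simp [pd, div_eq_mul_inv, fderiv_mul_const hf, mul_comm]

lemma pd_sum {ι : Type*} (s : Finset ι) {F : ι → V3 → ℝ} (i : Fin 3)
    (hF : ∀ j ∈ s, DifferentiableAt ℝ (F j) x) :
    pd i (fun y => ∑ j ∈ s, F j y) x = ∑ j ∈ s, pd i (F j) x := by
  simp [pd, fderiv_fun_sum hF]

end ProductRules

section VectorCalculus

variable {F G : V3 → V3} {f : V3 → ℝ} {x : V3}

lemma differentiableAt_dot3 (hF : ∀ j, DifferentiableAt ℝ (fun y => F y j) x)
    (hG : ∀ j, DifferentiableAt ℝ (fun y => G y j) x) :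
    DifferentiableAt ℝ (fun y => dot3 (F y) (G y)) x :=
  DifferentiableAt.fun_sum fun j _ => (hF j).mul (hG j)

lemma pd_dot3 (i : Fin 3) (hF : ∀ j, DifferentiableAt ℝ (fun y => F y j) x)
    (hG : ∀ j, DifferentiableAt ℝ (fun y => G y j) x) :
    pd i (fun y => dot3 (F y) (G y)) x
      = ∑ j, (F x j * pd i (fun y => G y j) x + G x j * pd i (fun y => F y j) x) := by
  simp only [dot3]
  rw [pd_sum (F := fun j y => F y j * G y j) _ i fun j _ => (hF j).mul (hG j)]
  exact Finset.sum_congr rfl fun j _ => pd_mul i (hF j) (hG j)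

lemma differentiableAt_half_dot3_self (hF : ∀ j, DifferentiableAt ℝ (fun y => F y j) x) :
    DifferentiableAt ℝ (fun y => dot3 (F y) (F y) / 2) x := by
  simpa only [div_eq_mul_inv] using (differentiableAt_dot3 hF hF).mul_const (2 : ℝ)⁻¹

lemma pd_half_dot3_self (i : Fin 3) (hF : ∀ j, DifferentiableAt ℝ (fun y => F y j) x) :
    pd i (fun y => dot3 (F y) (F y) / 2) x = ∑ j, F x j * pd i (fun y => F y j) x := by
  rw [pd_div_const i 2 (differentiableAt_dot3 hF hF), pd_dot3 i hF hF]
  simp only [← two_mul, ← Finset.mul_sum]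
  ring

lemma grad3_dot3 (hF : ∀ j, DifferentiableAt ℝ (fun y => F y j) x)
    (hG : ∀ j, DifferentiableAt ℝ (fun y => G y j) x) :
    grad3 (fun y => dot3 (F y) (G y)) x
      = fun i => ∑ j, (F x j * pd i (fun y => G y j) x + G x j * pd i (fun y => F y j) x) :=
  funext fun i => pd_dot3 i hF hG

lemma div3_add (hF : ∀ j, DifferentiableAt ℝ (fun y => F y j) x)
    (hG : ∀ j, DifferentiableAt ℝ (fun y => G y j) x) :
    div3 (fun y => F y + G y) x = div3 F x + div3 G x := by
  simp only [div3, Pi.add_apply, pd_add _ (hF _) (hG _), Finset.sum_add_distrib]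

lemma div3_smul (hf : DifferentiableAt ℝ f x) (hF : ∀ j, DifferentiableAt ℝ (fun y => F y j) x) :
    div3 (fun y => f y • F y) x = f x * div3 F x + dot3 (F x) (grad3 f x) := by
  simp only [div3, dot3, grad3, Pi.smul_apply, smul_eq_mul, pd_mul _ hf (hF _),
    Finset.sum_add_distrib, Finset.mul_sum]

lemma div3_cross_helicity_flux (hF : ∀ j, DifferentiableAt ℝ (fun y => F y j) x)
    (hG : ∀ j, DifferentiableAt ℝ (fun y => G y j) x) (hf : DifferentiableAt ℝ f x) :
    div3 (fun y => dot3 (F y) (G y) • F y + f y • G y) x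
      = dot3 (F x) (G x) * div3 F x + dot3 (F x) (grad3 (fun y => dot3 (F y) (G y)) x)
        + (f x * div3 G x + dot3 (G x) (grad3 f x)) := by
  have hFG := differentiableAt_dot3 hF hG
  rw [div3_add (F := fun y => dot3 (F y) (G y) • F y) (G := fun y => f y • G y)
    (fun j => hFG.mul (hF j)) (fun j => hf.mul (hG j)), div3_smul hFG hF, div3_smul hf hG]

end VectorCalculus

lemma deriv_dot3 {f g : ℝ → V3} {t : ℝ} (hf : ∀ i, DifferentiableAt ℝ (fun s => f s i) t)
    (hg : ∀ i, DifferentiableAt ℝ (fun s => g s i) t) :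
    deriv (fun s => dot3 (f s) (g s)) t
      = ∑ i, (deriv (fun s => f s i) t * g t i + f t i * deriv (fun s => g s i) t) :=
  (HasDerivAt.fun_sum fun i _ => (hf i).hasDerivAt.mul (hg i).hasDerivAt).deriv

theorem cross_helicity_transport_from_momentum_general
    (u B : V3 → ℝ → V3) (ρ S T h Φ pΔ : V3 → ℝ → ℝ) (μ₀ : ℝ)
    (hu : C1Vector u) (hB : C1Vector B)
    (hh : C1Scalar h) (hΦ : C1Scalar Φ)
    (hMomentum : ∀ (x : V3) (t : ℝ) (i : Fin 3),
      deriv (fun s => u x s i) t + ∑ j, u x t j * pd j (fun y => u y t i) x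
        = T x t * pd i (fun y => S y t) x
          - pd i (fun y => h y t) x
          + cross3
              (curl3 (fun y => (1 - μ₀ * pΔ y t / (norm3 (B y t)) ^ 2) • B y t) x)
              (B x t) i / (μ₀ * ρ x t)
          - pd i (fun y => Φ y t) x)
    (hFaraday : ∀ (x : V3) (t : ℝ) (i : Fin 3),
      deriv (fun s => B x s i) t
        - ∑ j, B x t j * pd j (fun y => u y t i) x
        + ∑ j, u x t j * pd j (fun y => B y t i) x
        + div3 (fun y => u y t) x * B x t i = 0)
    (hGauss : ∀ (x : V3) (t : ℝ), div3 (fun y => B y t) x = 0) :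
    ∀ (x : V3) (t : ℝ),
      deriv (fun s => dot3 (u x s) (B x s)) t
        + div3 (fun y =>
            (dot3 (u y t) (B y t)) • u y t
              + (Φ y t + h y t - dot3 (u y t) (u y t) / 2) • B y t) x
      = T x t * dot3 (B x t) (grad3 (fun y => S y t) x) := by
  intro x t
  have hux := hu.differentiableAt_space x t
  have hBx := hB.differentiableAt_space x t
  have hΦh := (hΦ.differentiableAt_space x t).fun_add (hh.differentiableAt_space x t)
  have hkin := differentiableAt_half_dot3_self hux
  have hgrad : grad3 (fun y => Φ y t + h y t - dot3 (u y t) (u y t) / 2) x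
      = fun i => pd i (fun y => Φ y t) x + pd i (fun y => h y t) x
          - ∑ j, u x t j * pd i (fun y => u y t j) x := by
    funext i
    rw [grad3, pd_sub i hΦh hkin, pd_add i (hΦ.differentiableAt_space x t)
      (hh.differentiableAt_space x t), pd_half_dot3_self i hux]
  rw [deriv_dot3 (hu.differentiableAt_time x t) (hB.differentiableAt_time x t),
    div3_cross_helicity_flux hux hBx (hΦh.fun_sub hkin), hGauss, hgrad,
    grad3_dot3 hux hBx]
  have hL := dot3_cross3_self_right
    (curl3 (fun y => (1 - μ₀ * pΔ y t / (norm3 (B y t)) ^ 2) • B y t) x) (B x t)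
  have hM := hMomentum x t
  have hF := hFaraday x t
  simp only [dot3, grad3, div3, Fin.sum_univ_three] at hM hF hL ⊢
  linear_combination B x t 0 * hM 0 + B x t 1 * hM 1 + B x t 2 * hM 2
    + u x t 0 * hF 0 + u x t 1 * hF 1 + u x t 2 * hF 2 + hL / (μ₀ * ρ x t)

/-- Cross-helicity transport from the thermodynamic (Euler–Poincaré) form of
the CGL momentum equation, Faraday's equation and Gauss's law:
`∂ₜ(u·B) + ∇·((u·B)u + (Φ + h − u²/2)B) = T (B·∇S)`. -/
theorem cross_helicity_transport_from_momentum
    (u B : V3 → ℝ → V3) (ρ S T h Φ pΔ : V3 → ℝ → ℝ) (μ₀ : ℝ)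
    (hμ₀ : 0 < μ₀)
    (hu : C1Vector u) (hB : C1Vector B)
    (hρ : C1Scalar ρ) (hS : C1Scalar S) (hT : C1Scalar T)
    (hh : C1Scalar h) (hΦ : C1Scalar Φ) (hpΔ : C1Scalar pΔ)
    (hρpos : ∀ x t, 0 < ρ x t) (hBpos : ∀ x t, 0 < norm3 (B x t))
    (hMomentum : ∀ (x : V3) (t : ℝ) (i : Fin 3),
      deriv (fun s => u x s i) t + ∑ j, u x t j * pd j (fun y => u y t i) x
        = T x t * pd i (fun y => S y t) x
          - pd i (fun y => h y t) x
          + cross3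
              (curl3 (fun y => (1 - μ₀ * pΔ y t / (norm3 (B y t)) ^ 2) • B y t) x)
              (B x t) i / (μ₀ * ρ x t)
          - pd i (fun y => Φ y t) x)
    (hFaraday : ∀ (x : V3) (t : ℝ) (i : Fin 3),
      deriv (fun s => B x s i) t
        - ∑ j, B x t j * pd j (fun y => u y t i) x
        + ∑ j, u x t j * pd j (fun y => B y t i) x
        + div3 (fun y => u y t) x * B x t i = 0)
    (hGauss : ∀ (x : V3) (t : ℝ), div3 (fun y => B y t) x = 0) :
    ∀ (x : V3) (t : ℝ),
      deriv (fun s => dot3 (u x s) (B x s)) t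
        + div3 (fun y =>
            (dot3 (u y t) (B y t)) • u y t
              + (Φ y t + h y t - dot3 (u y t) (u y t) / 2) • B y t) x
      = T x t * dot3 (B x t) (grad3 (fun y => S y t) x) :=
  cross_helicity_transport_from_momentum_general u B ρ S T h Φ pΔ μ₀ hu hB hh hΦ hMomentum hFaraday
    hGauss
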